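/- arXiv:0912.4325 — 2 statements merged into one kernel-verified Lean document; each statement's English description precedes it below -/
import Mathlib

section
/- Let G be an abelian group such that multiplication by a prime ℓ is surjective on G and has finite kernel G₁ of order ℓ^h. Then for every natural number n, the kernel Gₙ of multiplication by ℓ^n on G is a free ℤ/ℓ^nℤ-module of rank h, i.e. Gₙ ≅ (ℤ/ℓ^nℤ)^h. -/
/-- The `m`-torsion subgroup `{w | m • w = 0}` of an abelian group. -/
def torsionSub (G : Type*) [AddCommGroup G] (m : ℕ) : AddSubgroup G where
  carrier := {x | m • x = 0}
  zero_mem' := by simp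
  add_mem' := by
    intro a b ha hb
    simp only [Set.mem_setOf_eq] at *
    rw [smul_add, ha, hb, add_zero]
  neg_mem' := by
    intro a ha
    simp only [Set.mem_setOf_eq] at *
    rw [smul_neg, ha, neg_zero]

/-! Multiplication by `ℓ` maps `Gₙ₊₁` onto `Gₙ` with kernel `G₁`, so `|Gₙ| = ℓ^(hn)`. By the
structure theorem, `Gₙ ≅ ∏ᵢ ℤ/ℓ^(kᵢ)` with `1 ≤ kᵢ ≤ n`. The `ℓ`-torsion of this product has order
`ℓ^(number of factors)` and is `G₁`, so there are `h` factors, and then `∑ kᵢ = hn` forces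
`kᵢ = n` for all `i`. -/

theorem AddSubgroup.card_comap_of_surjective {A B : Type*} [AddGroup A] [AddGroup B] {f : A →+ B}
    (hf : Function.Surjective f) (H : AddSubgroup B) :
    Nat.card (H.comap f) = Nat.card f.ker * Nat.card H := by
  have hle : f.ker ≤ H.comap f := fun x hx => by simp [(AddMonoidHom.mem_ker).1 hx]
  rw [← (f.ker.addSubgroupOf (H.comap f)).card_mul_index, ← AddSubgroup.relIndex,
    AddSubgroup.relIndex_ker, AddSubgroup.map_comap_eq_self_of_surjective hf,
    Nat.card_congr (AddSubgroup.addSubgroupOfEquivOfLe hle).toEquiv]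

section torsionSub

variable {G : Type*} [AddCommGroup G]

@[simp]
theorem mem_torsionSub {m : ℕ} {x : G} : x ∈ torsionSub G m ↔ m • x = 0 := Iff.rfl

theorem torsionSub_one : torsionSub G 1 = ⊥ := by
  ext x
  simp

theorem torsionSub_mul_eq_comap (k m : ℕ) :
    torsionSub G (k * m) = (torsionSub G k).comap (nsmulAddMonoidHom m) := by
  ext x
  simp [mul_smul]

theorem ker_nsmulAddMonoidHom (m : ℕ) : (nsmulAddMonoidHom m : G →+ G).ker = torsionSub G m := by
  ext x
  simp

theorem card_torsionSub_mul {m : ℕ} (hm : Function.Surjective fun x : G => m • x) (k : ℕ) :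
    Nat.card (torsionSub G (k * m)) = Nat.card (torsionSub G m) * Nat.card (torsionSub G k) := by
  rw [torsionSub_mul_eq_comap, AddSubgroup.card_comap_of_surjective hm, ker_nsmulAddMonoidHom]

theorem card_torsionSub_pow {ℓ : ℕ} (hℓ : Function.Surjective fun x : G => ℓ • x) (n : ℕ) :
    Nat.card (torsionSub G (ℓ ^ n)) = Nat.card (torsionSub G ℓ) ^ n := by
  induction n with
  | zero => simp [torsionSub_one]
  | succ n ih => rw [pow_succ, card_torsionSub_mul hℓ, ih, pow_succ']

theorem card_torsionSub_torsionSub {k m : ℕ} (hkm : k ∣ m) :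
    Nat.card (torsionSub (torsionSub G m) k) = Nat.card (torsionSub G k) := by
  have hle : torsionSub G k ≤ torsionSub G m := by
    obtain ⟨c, rfl⟩ := hkm
    intro x hx
    simp_all [mul_comm k, mul_smul]
  have heq : torsionSub (torsionSub G m) k = (torsionSub G k).addSubgroupOf (torsionSub G m) := by
    ext x
    simp [AddSubgroup.mem_addSubgroupOf, ← Subtype.val_inj (a := k • x)]
  rw [heq, Nat.card_congr (AddSubgroup.addSubgroupOfEquivOfLe hle).toEquiv]

theorem card_torsionSub_congr {H : Type*} [AddCommGroup H] (e : G ≃+ H) (m : ℕ) :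
    Nat.card (torsionSub G m) = Nat.card (torsionSub H m) :=
  Nat.card_congr (e.toEquiv.subtypeEquiv fun x => by simp [← map_nsmul])

end torsionSub

theorem card_torsionSub_pi {ι : Type*} [Fintype ι] (M : ι → Type*) [∀ i, AddCommGroup (M i)]
    (m : ℕ) : Nat.card (torsionSub (∀ i, M i) m) = ∏ i, Nat.card (torsionSub (M i) m) := by
  rw [← Nat.card_pi]
  exact Nat.card_congr ((Equiv.subtypeEquivRight
    (q := fun f : ∀ i, M i => ∀ i, f i ∈ torsionSub (M i) m) fun f => by simp [funext_iff]).trans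
    (Equiv.subtypePiEquivPi (p := fun i x => x ∈ torsionSub (M i) m)))

theorem card_torsionSub_zmod_prime_pow {ℓ k : ℕ} (hℓ : ℓ.Prime) (hk : k ≠ 0) :
    Nat.card (torsionSub (ZMod (ℓ ^ k)) ℓ) = ℓ := by
  classical
  have : Fact ℓ.Prime := ⟨hℓ⟩
  apply le_antisymm
  · change Nat.card {x : ZMod (ℓ ^ k) // ℓ • x = 0} ≤ ℓ
    rw [Nat.card_eq_fintype_card, Fintype.card_subtype]
    exact IsAddCyclic.card_nsmul_eq_zero_le hℓ.pos
  · obtain ⟨g, hg⟩ := exists_prime_addOrderOf_dvd_card' (G := ZMod (ℓ ^ k)) ℓ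
      (by rw [Nat.card_zmod]; exact dvd_pow_self ℓ hk)
    have hg_mem : g ∈ torsionSub (ZMod (ℓ ^ k)) ℓ := by
      have := addOrderOf_nsmul_eq_zero g
      rwa [hg] at this
    calc ℓ = Nat.card (AddSubgroup.zmultiples g) := by rw [Nat.card_zmultiples, hg]
      _ ≤ _ := AddSubgroup.card_le_of_le (AddSubgroup.zmultiples_le_of_mem hg_mem)

theorem exists_addEquiv_pi_zmod_prime_pow {A : Type*} [AddCommGroup A] [Finite A] {ℓ n : ℕ}
    (hℓ : ℓ.Prime) (hA : ∀ a : A, ℓ ^ n • a = 0) :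
    ∃ (ι : Type) (_ : Fintype ι) (k : ι → ℕ),
      (∀ i, k i ≠ 0 ∧ k i ≤ n) ∧ Nonempty (A ≃+ ∀ i, ZMod (ℓ ^ k i)) := by
  obtain ⟨ι, _, m, hm, ⟨e⟩⟩ := AddCommGroup.equiv_directSum_zmod_of_finite' A
  let e' := e.trans (DirectSum.addEquivProd _)
  have hone : ℓ ^ n • (fun i => (1 : ZMod (m i))) = 0 := by
    simpa [← map_nsmul] using congrArg e' (hA (e'.symm fun i => 1))
  have hdvd (i : ι) : m i ∣ ℓ ^ n :=
    ZMod.addOrderOf_one (m i) ▸ addOrderOf_dvd_of_nsmul_eq_zero (congrFun hone i)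
  choose k hkn hmk using fun i => (Nat.dvd_prime_pow hℓ).1 (hdvd i)
  refine ⟨ι, inferInstance, k,
    fun i => ⟨fun hk0 => (hm i).ne' (by rw [hmk i, hk0, pow_zero]), hkn i⟩,
    ⟨e'.trans (AddEquiv.piCongrRight fun i => (ZMod.ringEquivCongr (hmk i)).toAddEquiv)⟩⟩

theorem nonempty_addEquiv_pi_zmod_of_card {A : Type*} [AddCommGroup A] [Finite A] {ℓ n h : ℕ}
    (hℓ : ℓ.Prime) (hA : ∀ a : A, ℓ ^ n • a = 0) (htors : Nat.card (torsionSub A ℓ) = ℓ ^ h)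
    (hcard : Nat.card A = ℓ ^ (h * n)) : Nonempty (A ≃+ (Fin h → ZMod (ℓ ^ n))) := by
  obtain ⟨ι, _, k, hk, ⟨e⟩⟩ := exists_addEquiv_pi_zmod_prime_pow hℓ hA
  have hι : Fintype.card ι = h := by
    refine Nat.pow_right_injective hℓ.two_le (show ℓ ^ _ = ℓ ^ _ from ?_)
    rw [← htors, card_torsionSub_congr e, card_torsionSub_pi,
      Finset.prod_congr rfl fun i _ => card_torsionSub_zmod_prime_pow hℓ (hk i).1,
      Finset.prod_const, Finset.card_univ]
  have hsum : ∑ i, k i = ∑ _i : ι, n := by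
    refine Nat.pow_right_injective hℓ.two_le (show ℓ ^ _ = ℓ ^ _ from ?_)
    rw [← Finset.prod_pow_eq_pow_sum, Finset.sum_const, Finset.card_univ, hι, smul_eq_mul,
      ← hcard, Nat.card_congr e.toEquiv, Nat.card_pi]
    simp only [Nat.card_zmod]
  obtain rfl : k = fun _ => n :=
    funext fun i => (Finset.sum_eq_sum_iff_of_le fun i _ => (hk i).2).1 hsum i (Finset.mem_univ i)
  exact ⟨e.trans (AddEquiv.arrowCongr (Fintype.equivFinOfCardEq hι) (AddEquiv.refl _))⟩

/-- If multiplication by the prime `ℓ` is surjective on an abelian group `G` and has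
finite kernel of order `ℓ^h`, then for every `n` the kernel of multiplication by `ℓ^n`
is a free `ℤ/ℓ^nℤ`-module of rank `h`, i.e. isomorphic to `(ℤ/ℓ^nℤ)^h`. -/
theorem torsion_of_divisible_free (ℓ : ℕ) (hℓ : ℓ.Prime) (h : ℕ)
    (G : Type*) [AddCommGroup G]
    (hsurj : Function.Surjective (fun x : G => ℓ • x))
    (hker : Nat.card (torsionSub G ℓ) = ℓ ^ h) :
    ∀ n : ℕ, Nonempty (torsionSub G (ℓ ^ n) ≃+ (Fin h → ZMod (ℓ ^ n))) := by
  intro n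
  rcases n.eq_zero_or_pos with rfl | hn
  · have : Unique (torsionSub G (ℓ ^ 0)) := by rw [pow_zero, torsionSub_one]; infer_instance
    have : Unique (ZMod (ℓ ^ 0)) := by rw [pow_zero]; infer_instance
    exact ⟨AddEquiv.ofUnique⟩
  have hcard : Nat.card (torsionSub G (ℓ ^ n)) = ℓ ^ (h * n) := by
    rw [card_torsionSub_pow hsurj, hker, pow_mul]
  have : Finite (torsionSub G (ℓ ^ n)) :=
    Nat.finite_of_card_ne_zero (by rw [hcard]; exact pow_ne_zero _ hℓ.ne_zero)
  refine nonempty_addEquiv_pi_zmod_of_card hℓ (fun a => Subtype.ext a.2) ?_ hcard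
  rw [card_torsionSub_torsionSub (dvd_pow_self ℓ hn.ne'), hker]
end

section
/- Let G and H be subgroups of an abelian group, commensurable in the sense that G ∩ H has finite index in both. Define the generalized index [G : H] = #(G/(G∩H)) / #(H/(G∩H)) ∈ ℚ. Then for commensurable subgroups G, H, K one has [G : K] = [G : H] · [H : K]. -/
/-!
All three generalized indices can be computed through the common subgroup `G ∩ H ∩ K`, which
has finite index in `G` and in `H`; expressed this way, the product `[G : H] · [H : K]`
telescopes to `[G : K]`.
-/

/-- The generalized index `[G : H] = #(G/(G∩H)) / #(H/(G∩H)) ∈ ℚ` of commensurable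
subgroups. -/
noncomputable def genIndex {A : Type*} [CommGroup A] (G H : Subgroup A) : ℚ :=
  (Subgroup.relIndex H G : ℚ) / (Subgroup.relIndex G H : ℚ)

open Subgroup

/-- Numerator and denominator both pick up the factor `[G ∩ K : L]`, which cancels. -/
theorem genIndex_eq_relIndex_div_relIndex {A : Type*} [CommGroup A] {G K L : Subgroup A}
    (hL : L ≤ G ⊓ K) (hLG : L.relIndex G ≠ 0) :
    genIndex G K = (L.relIndex G : ℚ) / L.relIndex K := by
  have hG : L.relIndex (G ⊓ K) * K.relIndex G = L.relIndex G := by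
    rw [← inf_relIndex_left G K, relIndex_mul_relIndex L _ G hL inf_le_left]
  have hK : L.relIndex (G ⊓ K) * G.relIndex K = L.relIndex K := by
    rw [← inf_relIndex_right G K, relIndex_mul_relIndex L _ K hL inf_le_right]
  have hLGK : (L.relIndex (G ⊓ K) : ℚ) ≠ 0 := by
    exact_mod_cast left_ne_zero_of_mul (hG.trans_ne hLG)
  rw [genIndex, ← hG, ← hK, Nat.cast_mul, Nat.cast_mul, mul_div_mul_left _ _ hLGK]

theorem genIndex_mul_general {A : Type*} [CommGroup A] (G H K : Subgroup A)
    (hGH : Subgroup.Commensurable G H) (hHK : Subgroup.Commensurable H K) :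
    genIndex G K = genIndex G H * genIndex H K := by
  have hGK : Commensurable G K := hGH.trans hHK
  have hG : (G ⊓ H ⊓ K).relIndex G ≠ 0 :=
    relIndex_inf_ne_zero (relIndex_inf_ne_zero (by simp) hGH.2) hGK.2
  have hH : (G ⊓ H ⊓ K).relIndex H ≠ 0 :=
    relIndex_inf_ne_zero (relIndex_inf_ne_zero hGH.1 (by simp)) hHK.2
  have hGK_le : G ⊓ H ⊓ K ≤ G ⊓ K := inf_le_inf_right K inf_le_left
  have hHK_le : G ⊓ H ⊓ K ≤ H ⊓ K := by rw [inf_assoc]; exact inf_le_right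
  rw [genIndex_eq_relIndex_div_relIndex hGK_le hG, genIndex_eq_relIndex_div_relIndex inf_le_left hG,
    genIndex_eq_relIndex_div_relIndex hHK_le hH, div_mul_div_cancel₀ (by exact_mod_cast hH)]

/-- For pairwise commensurable subgroups `G, H, K` of an abelian group, the generalized
index is multiplicative: `[G : K] = [G : H] · [H : K]`. -/
theorem genIndex_mul {A : Type*} [CommGroup A] (G H K : Subgroup A)
    (hGH : Subgroup.Commensurable G H) (hHK : Subgroup.Commensurable H K) (hGK : Subgroup.Commensurable G K) :
    genIndex G K = genIndex G H * genIndex H K :=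
  genIndex_mul_general G H K hGH hHK
end
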